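/- arXiv:1811.08058 — 4 statements merged into one kernel-verified Lean document; each statement's English description precedes it below -/
import Mathlib

section
/- If RT(T, ψ) < 1, then a percolation on the rooted tree T satisfying P(e ∈ C(ρ) | parent of e ∈ C(ρ)) = ψ(e) (with generation-1 edges open a.s.) is subcritical, i.e. the cluster of the root is finite almost surely. -/
open MeasureTheory ProbabilityTheory Finset ENNReal

/-- An abstract infinite, locally finite, rooted tree, described through its set of
edges `E`, the generation `gen e` (distance of the far endpoint of `e` from the root)
and the parent map on edges. -/
structure CKTree where
  E : Type
  gen : E → ℕ
  gen_pos : ∀ e, 1 ≤ gen e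
  parent : E → E
  parent_gen : ∀ e, 1 < gen e → gen (parent e) + 1 = gen e
  locally_finite : ∀ n, {e | gen e = n}.Finite
  infinite : Infinite E

namespace CKTree

/-- `g ≤ e` : `g` lies on the path from the root to `e`. -/
def ple (T : CKTree) (g e : T.E) : Prop := ∃ k < T.gen e, T.parent^[k] e = g

/-- A ray in the tree: an infinite self-avoiding path started at the root. -/
def IsRay (T : CKTree) (r : ℕ → T.E) : Prop :=
  (∀ k, T.gen (r k) = k + 1) ∧ ∀ k, T.parent (r (k + 1)) = r k

/-- A cutset: a set of edges crossed exactly once by every ray. -/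
def IsCutset (T : CKTree) (π : Finset T.E) : Prop :=
  ∀ r : ℕ → T.E, T.IsRay r → ∃! k, r k ∈ π

/-- The product of `ψ` over the edges of the path from the root to `e`. -/
noncomputable def pathProd (T : CKTree) (ψ : T.E → ℝ) (e : T.E) : ℝ :=
  ∏ k ∈ Finset.range (T.gen e), ψ (T.parent^[k] e)

/-- The infimum over cutsets of the cutset sums of `f`. -/
noncomputable def cutInf (T : CKTree) (f : T.E → ℝ) : ℝ :=
  sInf ((fun π : Finset T.E => ∑ e ∈ π, f e) '' {π | T.IsCutset π})

/-- The branching number of the tree. -/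
noncomputable def br (T : CKTree) : ℝ≥0∞ :=
  sSup {x : ℝ≥0∞ | ∃ γ : ℝ, 0 < γ ∧ x = ENNReal.ofReal γ ∧
    0 < T.cutInf (fun e => γ ^ (-(T.gen e : ℝ)))}

/-- The branching-ruin number of the tree. -/
noncomputable def brr (T : CKTree) : ℝ≥0∞ :=
  sSup {x : ℝ≥0∞ | ∃ γ : ℝ, 0 < γ ∧ x = ENNReal.ofReal γ ∧
    0 < T.cutInf (fun e => (T.gen e : ℝ) ^ (-γ))}

/-- The quantity `RT(T, ψ)`. -/
noncomputable def RT (T : CKTree) (ψ : T.E → ℝ) : ℝ≥0∞ :=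
  sSup {x : ℝ≥0∞ | ∃ γ : ℝ, 0 < γ ∧ x = ENNReal.ofReal γ ∧
    0 < T.cutInf (fun e => T.pathProd ψ e ^ γ)}

end CKTree
namespace CKTree

variable (T : CKTree)

theorem gen_iterate (e : T.E) : ∀ k, k < T.gen e → T.gen (T.parent^[k] e) = T.gen e - k := by
  intro k
  induction k with
  | zero => simp
  | succ k ih =>
    intro hk
    have hk' : k < T.gen e := by omega
    have h1 : 1 < T.gen (T.parent^[k] e) := by rw [ih hk']; omega
    have := T.parent_gen _ h1
    rw [Function.iterate_succ_apply']
    rw [ih hk'] at this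
    omega

theorem mem_iterate {S : Set T.E} (hcl : ∀ e ∈ S, 1 < T.gen e → T.parent e ∈ S)
    {e : T.E} (he : e ∈ S) : ∀ k, k < T.gen e → T.parent^[k] e ∈ S := by
  intro k
  induction k with
  | zero => intro _; simpa using he
  | succ k ih =>
    intro hk
    have hk' : k < T.gen e := by omega
    have h1 : 1 < T.gen (T.parent^[k] e) := by rw [T.gen_iterate e k hk']; omega
    rw [Function.iterate_succ_apply']
    exact hcl _ (ih hk') h1

theorem pathProd_parent (ψ : T.E → ℝ) (e : T.E) (h : 1 < T.gen e) :
    T.pathProd ψ e = ψ e * T.pathProd ψ (T.parent e) := by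
  have hg := T.parent_gen e h
  unfold pathProd
  rw [← hg, Finset.prod_range_succ']
  simp only [Function.iterate_succ_apply, Function.iterate_zero_apply]
  ring

end CKTree

namespace CKTree
variable (T : CKTree)

/-- `e` has a descendant in `S` exactly `m` generations above it. -/
def desc (S : Set T.E) (e : T.E) (m : ℕ) : Prop :=
  ∃ f, f ∈ S ∧ T.gen f = T.gen e + m ∧ T.parent^[m] f = e

/-- `e` has descendants in `S` at every depth. -/
def extendable (S : Set T.E) (e : T.E) : Prop := ∀ m, T.desc S e m

theorem desc_mono {S : Set T.E} (hcl : ∀ e ∈ S, 1 < T.gen e → T.parent e ∈ S)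
    {e : T.E} {m m' : ℕ} (hm : m' ≤ m) (h : T.desc S e m) : T.desc S e m' := by
  obtain ⟨f, hfS, hgf, hpf⟩ := h
  have hge := T.gen_pos e
  have hlt : m - m' < T.gen f := by omega
  refine ⟨T.parent^[m - m'] f, T.mem_iterate hcl hfS _ hlt, ?_, ?_⟩
  · rw [T.gen_iterate f _ hlt]; omega
  · rw [← Function.iterate_add_apply]
    have : m' + (m - m') = m := by omega
    rw [this, hpf]

theorem exists_gen_gt {S : Set T.E} (hS : S.Infinite) (n : ℕ) : ∃ f ∈ S, n < T.gen f := by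
  by_contra h
  push_neg at h
  have hsub : S ⊆ ⋃ k ∈ Finset.range (n + 1), {e : T.E | T.gen e = k} := by
    intro f hf
    simp only [Set.mem_iUnion, Finset.mem_range, Set.mem_setOf_eq]
    exact ⟨T.gen f, by have := h f hf; omega, rfl⟩
  exact hS ((Set.Finite.biUnion (Finset.range (n + 1)).finite_toSet
    (fun k _ => T.locally_finite k)).subset hsub)

theorem pigeon {n : ℕ} (a : ℕ → T.E) (ha : ∀ m, T.gen (a m) = n) :
    ∃ e, T.gen e = n ∧ ∀ N, ∃ m ≥ N, a m = e := by
  have hfin : Finite {e : T.E // T.gen e = n} := (T.locally_finite n).to_subtype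
  obtain ⟨y, hy⟩ := Finite.exists_infinite_fiber
    (fun m => (⟨a m, ha m⟩ : {e : T.E // T.gen e = n}))
  have hys : ((fun m => (⟨a m, ha m⟩ : {e : T.E // T.gen e = n})) ⁻¹' {y}).Infinite :=
    Set.infinite_coe_iff.mp hy
  refine ⟨y.1, y.2, fun N => ?_⟩
  obtain ⟨m, hm, hmN⟩ := hys.exists_gt N
  exact ⟨m, le_of_lt hmN, congrArg Subtype.val (by simpa using hm)⟩

theorem exists_ray_subset {S : Set T.E} (hS : S.Infinite)
    (hcl : ∀ e ∈ S, 1 < T.gen e → T.parent e ∈ S) :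
    ∃ r : ℕ → T.E, T.IsRay r ∧ ∀ k, r k ∈ S := by
  classical
  -- base: a generation-one edge with descendants at every depth
  have hbase : ∃ e, e ∈ S ∧ T.gen e = 1 ∧ T.extendable S e := by
    have h1 : ∀ m : ℕ, ∃ e, T.gen e = 1 ∧ e ∈ S ∧ T.desc S e m := by
      intro m
      obtain ⟨f, hfS, hgf⟩ := T.exists_gen_gt hS m
      have hlt : T.gen f - 1 < T.gen f := by omega
      refine ⟨T.parent^[T.gen f - 1] f, ?_, T.mem_iterate hcl hfS _ hlt, ?_⟩
      · rw [T.gen_iterate f _ hlt]; omega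
      · refine T.desc_mono hcl (show m ≤ T.gen f - 1 by omega) ⟨f, hfS, ?_, rfl⟩
        rw [T.gen_iterate f _ hlt]; omega
    choose a ha1 haS haD using h1
    obtain ⟨e, he1, he⟩ := T.pigeon a ha1
    obtain ⟨m0, _, hm0⟩ := he 0
    refine ⟨e, hm0 ▸ haS m0, he1, fun m => ?_⟩
    obtain ⟨m', hm', heq⟩ := he m
    exact T.desc_mono hcl hm' (heq ▸ haD m')
  -- step: extendable edges have extendable children in S
  have hstep : ∀ e, e ∈ S → T.extendable S e →
      ∃ e', e' ∈ S ∧ T.parent e' = e ∧ T.gen e' = T.gen e + 1 ∧ T.extendable S e' := by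
    intro e _ hE
    have h1 : ∀ m : ℕ, ∃ c, T.gen c = T.gen e + 1 ∧
        (c ∈ S ∧ T.parent c = e) ∧ T.desc S c m := by
      intro m
      obtain ⟨f, hfS, hgf, hpf⟩ := hE (m + 1)
      have hlt : m < T.gen f := by omega
      refine ⟨T.parent^[m] f, ?_, ⟨T.mem_iterate hcl hfS _ hlt, ?_⟩, f, hfS, ?_, rfl⟩
      · rw [T.gen_iterate f _ hlt]; omega
      · rw [← Function.iterate_succ_apply' T.parent m f]; exact hpf
      · rw [T.gen_iterate f _ hlt]; omega
    choose a ha1 haP haD using h1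
    obtain ⟨e', he1, he⟩ := T.pigeon a ha1
    obtain ⟨m0, _, hm0⟩ := he 0
    refine ⟨e', (hm0 ▸ (haP m0)).1, (hm0 ▸ (haP m0)).2, he1, fun m => ?_⟩
    obtain ⟨m', hm', heq⟩ := he m
    exact T.desc_mono hcl hm' (heq ▸ haD m')
  obtain ⟨e₀, he₀S, he₀g, he₀E⟩ := hbase
  set next : T.E → T.E := fun e =>
    if h : e ∈ S ∧ T.extendable S e then (hstep e h.1 h.2).choose else e with hnextdef
  have hnext : ∀ e, (h : e ∈ S ∧ T.extendable S e) → next e ∈ S ∧ T.parent (next e) = e ∧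
      T.gen (next e) = T.gen e + 1 ∧ T.extendable S (next e) := by
    intro e h
    have hspec := (hstep e h.1 h.2).choose_spec
    simp only [hnextdef, dif_pos h]
    exact hspec
  set r : ℕ → T.E := fun k => next^[k] e₀ with hrdef
  have hiter : ∀ k, r (k + 1) = next (r k) := fun k => Function.iterate_succ_apply' next k e₀
  have key : ∀ k, (r k ∈ S ∧ T.extendable S (r k)) ∧ T.gen (r k) = k + 1 := by
    intro k
    induction k with
    | zero => exact ⟨⟨he₀S, he₀E⟩, he₀g⟩
    | succ k ih =>
      obtain ⟨h1, _, h3, h4⟩ := hnext (r k) ih.1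
      rw [hiter k]
      exact ⟨⟨h1, h4⟩, by rw [h3, ih.2]⟩
  refine ⟨r, ⟨fun k => (key k).2, fun k => ?_⟩, fun k => (key k).1.1⟩
  rw [hiter k]
  exact (hnext (r k) (key k).1).2.1

end CKTree

namespace CKTree
variable (T : CKTree)

theorem pathProd_nonneg (ψ : T.E → ℝ) (hψ : ∀ e, 0 ≤ ψ e) (e : T.E) :
    0 ≤ T.pathProd ψ e := Finset.prod_nonneg fun _ _ => hψ _

theorem pathProd_of_gen_one (ψ : T.E → ℝ) (e : T.E) (h : T.gen e = 1) :
    T.pathProd ψ e = ψ e := by unfold pathProd; rw [h]; simp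

theorem isCutset_slice_one : T.IsCutset ((T.locally_finite 1).toFinset) := by
  intro r hr
  refine ⟨0, (Set.Finite.mem_toFinset _).mpr (hr.1 0), fun k hk => ?_⟩
  have hk' : r k ∈ (T.locally_finite 1).toFinset := hk
  have h1 : r k ∈ {e : T.E | T.gen e = 1} :=
    (Set.Finite.mem_toFinset (T.locally_finite 1)).mp hk'
  have h2 := hr.1 k
  simp only [Set.mem_setOf_eq] at h1
  omega

theorem slice_one_nonempty : ∃ e : T.E, T.gen e = 1 := by
  have := T.infinite
  obtain ⟨e⟩ : Nonempty T.E := inferInstance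
  have hge := T.gen_pos e
  have hlt : T.gen e - 1 < T.gen e := by omega
  exact ⟨T.parent^[T.gen e - 1] e, by rw [T.gen_iterate e _ hlt]; omega⟩

end CKTree

/-- If `RT(T, ψ) < 1`, a percolation in which generation-one edges are open a.s. and each
deeper edge is in the root's open cluster with conditional probability `ψ(e)` given its
parent edge is, is subcritical: the root's cluster is finite almost surely. -/
theorem subcritical_of_RT_lt_one (T : CKTree) {Ω : Type} [MeasurableSpace Ω]
    (μ : Measure Ω) [IsProbabilityMeasure μ] (Cl : Ω → Set T.E) (ψ : T.E → ℝ)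
    (hmeas : ∀ e, MeasurableSet {ω | e ∈ Cl ω})
    (hanc : ∀ ω, ∀ e ∈ Cl ω, 1 < T.gen e → T.parent e ∈ Cl ω)
    (hone : ∀ e, T.gen e = 1 → μ {ω | e ∈ Cl ω} = 1)
    (hcond : ∀ e, 1 < T.gen e →
      (μ[|{ω | T.parent e ∈ Cl ω}]) {ω | e ∈ Cl ω} = ENNReal.ofReal (ψ e))
    (hψ : ∀ e, 0 < ψ e ∧ ψ e ≤ 1)
    (hRT : T.RT ψ < 1) :
    μ {ω | (Cl ω).Infinite} = 0 := by
  classical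
  set A : Finset T.E := (T.locally_finite 1).toFinset with hA
  have hAne : A.Nonempty := by
    obtain ⟨e, he⟩ := T.slice_one_nonempty
    exact ⟨e, (Set.Finite.mem_toFinset _).mpr he⟩
  set c : ℝ := A.inf' hAne ψ with hcdef
  have hc_pos : 0 < c := (Finset.lt_inf'_iff hAne).mpr fun e _ => (hψ e).1
  have hc_le : ∀ e, T.gen e = 1 → c ≤ ψ e := fun e he =>
    Finset.inf'_le ψ ((Set.Finite.mem_toFinset _).mpr he)
  -- first-moment bound on single-edge probabilities
  have hbound : ∀ n (e : T.E), T.gen e = n + 1 →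
      μ {ω | e ∈ Cl ω} ≤ ENNReal.ofReal (T.pathProd ψ e) / ENNReal.ofReal c := by
    intro n
    induction n with
    | zero =>
      intro e he
      rw [hone e he, T.pathProd_of_gen_one ψ e he,
        ENNReal.le_div_iff_mul_le (Or.inl (ne_of_gt (ENNReal.ofReal_pos.mpr hc_pos)))
          (Or.inl ENNReal.ofReal_ne_top), one_mul]
      exact ENNReal.ofReal_le_ofReal (hc_le e he)
    | succ n ih =>
      intro e he
      have h1 : 1 < T.gen e := by omega
      have hgp : T.gen (T.parent e) = n + 1 := by have := T.parent_gen e h1; omega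
      set s := {ω | T.parent e ∈ Cl ω} with hs
      have hst : {ω | e ∈ Cl ω} ⊆ s := fun ω hω => hanc ω e hω h1
      have hca : ENNReal.ofReal (ψ e) = (μ s)⁻¹ * μ {ω | e ∈ Cl ω} := by
        rw [← hcond e h1, ProbabilityTheory.cond_apply (hmeas (T.parent e)) μ,
          Set.inter_eq_self_of_subset_right hst]
      have hs0 : μ s ≠ 0 := by
        intro h0
        have hz : μ {ω | e ∈ Cl ω} = 0 :=
          le_antisymm (h0 ▸ measure_mono hst) zero_le
        rw [h0, hz, mul_zero] at hca
        exact absurd hca (ne_of_gt (ENNReal.ofReal_pos.mpr (hψ e).1))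
      have hmt : μ {ω | e ∈ Cl ω} = ENNReal.ofReal (ψ e) * μ s := by
        rw [hca, mul_comm ((μ s)⁻¹), mul_assoc,
          ENNReal.inv_mul_cancel hs0 (measure_ne_top μ s), mul_one]
      rw [hmt, T.pathProd_parent ψ e h1, ENNReal.ofReal_mul (le_of_lt (hψ e).1)]
      calc ENNReal.ofReal (ψ e) * μ s
          ≤ ENNReal.ofReal (ψ e) *
            (ENNReal.ofReal (T.pathProd ψ (T.parent e)) / ENNReal.ofReal c) :=
            mul_le_mul_right (ih (T.parent e) hgp) _
        _ = ENNReal.ofReal (ψ e) * ENNReal.ofReal (T.pathProd ψ (T.parent e)) /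
            ENNReal.ofReal c := by rw [← mul_div_assoc]
  -- conclusion via small cutsets
  have hfinal : ∀ δ : ℝ, 0 < δ → μ {ω | (Cl ω).Infinite} ≤ ENNReal.ofReal δ := by
    intro δ hδ
    have hnot : ¬ 0 < T.cutInf (fun e => T.pathProd ψ e ^ (1 : ℝ)) := by
      intro hpos
      unfold CKTree.RT at hRT
      have hmem : (1 : ℝ≥0∞) ∈ {x : ℝ≥0∞ | ∃ γ : ℝ, 0 < γ ∧ x = ENNReal.ofReal γ ∧
          0 < T.cutInf (fun e => T.pathProd ψ e ^ γ)} :=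
        ⟨1, one_pos, by simp, hpos⟩
      exact absurd (le_sSup hmem) (not_le.mpr hRT)
    have hci : T.cutInf (fun e => T.pathProd ψ e) ≤ 0 := by
      have heq : (fun e => T.pathProd ψ e ^ (1 : ℝ)) = fun e => T.pathProd ψ e := by
        funext e; exact Real.rpow_one _
      rw [heq] at hnot
      exact not_lt.mp hnot
    obtain ⟨π, hπ, hsum⟩ : ∃ π : Finset T.E, T.IsCutset π ∧
        ∑ e ∈ π, T.pathProd ψ e < δ * c := by
      by_contra h
      push_neg at h
      have hlb : δ * c ≤ T.cutInf (fun e => T.pathProd ψ e) := by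
        unfold CKTree.cutInf
        have hcs : {π : Finset T.E | T.IsCutset π}.Nonempty :=
          Set.nonempty_of_mem (show _ ∈ {π : Finset T.E | T.IsCutset π} from
            T.isCutset_slice_one)
        apply le_csInf (hcs.image _)
        rintro b ⟨π, hπ, rfl⟩
        simpa using h π hπ
      nlinarith [mul_pos hδ hc_pos]
    have hsub : {ω | (Cl ω).Infinite} ⊆ ⋃ e ∈ π, {ω | e ∈ Cl ω} := by
      intro ω hω
      obtain ⟨r, hr, hrS⟩ := T.exists_ray_subset hω (fun e he h1 => hanc ω e he h1)
      obtain ⟨k, hk, -⟩ := hπ r hr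
      exact Set.mem_biUnion hk (hrS k)
    calc μ {ω | (Cl ω).Infinite} ≤ ∑ e ∈ π, μ {ω | e ∈ Cl ω} :=
          (measure_mono hsub).trans (measure_biUnion_finset_le π _)
      _ ≤ ∑ e ∈ π, ENNReal.ofReal (T.pathProd ψ e) / ENNReal.ofReal c :=
          Finset.sum_le_sum fun e _ => by
            have := T.gen_pos e
            exact hbound (T.gen e - 1) e (by omega)
      _ = ENNReal.ofReal (∑ e ∈ π, T.pathProd ψ e) / ENNReal.ofReal c := by
          rw [ENNReal.ofReal_sum_of_nonneg
            fun e _ => T.pathProd_nonneg ψ (fun g => (hψ g).1.le) e]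
          simp only [div_eq_mul_inv]
          rw [Finset.sum_mul]
      _ ≤ ENNReal.ofReal (δ * c) / ENNReal.ofReal c := by
          exact ENNReal.div_le_div_right (ENNReal.ofReal_le_ofReal hsum.le) _
      _ = ENNReal.ofReal δ := by
          rw [ENNReal.ofReal_mul hδ.le, mul_div_assoc,
            ENNReal.div_self (ne_of_gt (ENNReal.ofReal_pos.mpr hc_pos))
              ENNReal.ofReal_ne_top, mul_one]
  by_contra h0
  have htop := measure_ne_top μ {ω | (Cl ω).Infinite}
  have hpos := ENNReal.toReal_pos h0 htop
  have key := hfinal ((μ {ω | (Cl ω).Infinite}).toReal / 2) (by linarith)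
  rw [ENNReal.ofReal_div_of_pos two_pos, ENNReal.ofReal_toReal htop] at key
  have h2 : ENNReal.ofReal 2 = (2 : ℝ≥0∞) := by norm_num
  rw [h2] at key
  exact absurd key (not_le.mpr (ENNReal.half_lt_self h0 htop))
end

section
/- For λ > 1 and constant cookie number M, if the branching number br(T) < λ^{M+1} then RT(T, ψ_{M,λ}) < 1, and if br(T) > λ^{M+1} then RT(T, ψ_{M,λ}) > 1. -/
open MeasureTheory ProbabilityTheory Finset ENNReal

namespace CKAux

open CKTree

lemma cutsets_nonempty (T : CKTree) (f : T.E → ℝ) (h : 0 < T.cutInf f) :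
    {π : Finset T.E | T.IsCutset π}.Nonempty := by
  by_contra hne
  rw [Set.not_nonempty_iff_eq_empty] at hne
  simp [CKTree.cutInf, hne] at h

lemma cutInf_mul_le (T : CKTree) (f g : T.E → ℝ) (c : ℝ) (hc : 0 ≤ c)
    (hf : ∀ e, 0 ≤ f e) (h : ∀ e, c * f e ≤ g e)
    (hne : {π : Finset T.E | T.IsCutset π}.Nonempty) :
    c * T.cutInf f ≤ T.cutInf g := by
  apply le_csInf (hne.image _)
  rintro b ⟨π, hπ, rfl⟩
  calc c * T.cutInf f ≤ c * ∑ e ∈ π, f e := by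
        apply mul_le_mul_of_nonneg_left _ hc
        apply csInf_le
        · refine ⟨0, ?_⟩
          rintro x ⟨π', _, rfl⟩
          exact Finset.sum_nonneg fun e _ => hf e
        · exact ⟨π, hπ, rfl⟩
    _ = ∑ e ∈ π, c * f e := by rw [Finset.mul_sum]
    _ ≤ ∑ e ∈ π, g e := Finset.sum_le_sum fun e _ => h e

lemma pathProd_eq (T : CKTree) (M : ℕ) (lam : ℝ) (hlam : 1 < lam)
    (ψ : T.E → ℝ)
    (hψ : ∀ e, ψ e = if T.gen e = 1 then 1
      else ((lam ^ (T.gen e - 1) - 1) / (lam ^ T.gen e - 1)) ^ (M + 1)) (e : T.E) :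
    T.pathProd ψ e = ((lam - 1) / (lam ^ T.gen e - 1)) ^ (M + 1) := by
  suffices H : ∀ n, ∀ e : T.E, T.gen e = n →
      T.pathProd ψ e = ((lam - 1) / (lam ^ n - 1)) ^ (M + 1) by
    exact H (T.gen e) e rfl
  intro n
  induction n with
  | zero => intro e he; exact absurd (he ▸ T.gen_pos e) (by norm_num)
  | succ m ih =>
    intro e he
    rcases Nat.eq_zero_or_pos m with hm | hm
    · subst hm
      unfold CKTree.pathProd
      rw [he, Finset.prod_range_one, Function.iterate_zero_apply, hψ, he]
      rw [if_pos rfl, pow_one, div_self (by linarith : lam - 1 ≠ 0), one_pow]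
    · have hg1 : 1 < T.gen e := by omega
      have hpe : T.gen (T.parent e) = m := by
        have := T.parent_gen e hg1; omega
      have hprev := ih (T.parent e) hpe
      unfold CKTree.pathProd at hprev ⊢
      rw [he, Finset.prod_range_succ']
      simp only [Function.iterate_succ_apply, Function.iterate_zero_apply]
      rw [hpe] at hprev
      rw [hprev, hψ e, he, if_neg (by omega), Nat.add_sub_cancel, ← mul_pow]
      congr 1
      have hm1 : lam ^ m - 1 ≠ 0 := by
        have : 1 < lam ^ m := one_lt_pow₀ hlam (by omega)
        linarith
      field_simp

lemma pathProd_rpow_bounds (T : CKTree) (M : ℕ) (lam : ℝ) (hlam : 1 < lam)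
    (ψ : T.E → ℝ)
    (hform : ∀ e, T.pathProd ψ e = ((lam - 1) / (lam ^ T.gen e - 1)) ^ (M + 1))
    (e : T.E) (s : ℝ) (hs : 0 < s) :
    (lam - 1) ^ (((M : ℝ) + 1) * s) * (lam ^ (((M : ℝ) + 1) * s)) ^ (-(T.gen e : ℝ))
      ≤ T.pathProd ψ e ^ s ∧
    T.pathProd ψ e ^ s
      ≤ lam ^ (((M : ℝ) + 1) * s) * (lam ^ (((M : ℝ) + 1) * s)) ^ (-(T.gen e : ℝ)) := by
  set n := T.gen e with hn
  have hn1 : 1 ≤ n := T.gen_pos e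
  set t : ℝ := ((M : ℝ) + 1) * s with ht
  have htpos : 0 < t := by positivity
  have hl0 : (0 : ℝ) ≤ lam := by linarith
  have hlm1 : (0 : ℝ) < lam - 1 := by linarith
  have hpn : (1 : ℝ) < lam ^ n := one_lt_pow₀ hlam (by omega)
  have hd : (0 : ℝ) < lam ^ n - 1 := by linarith
  set x : ℝ := (lam - 1) / (lam ^ n - 1) with hx
  have hxpos : 0 < x := div_pos hlm1 hd
  have h1 : T.pathProd ψ e ^ s = x ^ t := by
    rw [hform e, ← hn, ← Real.rpow_natCast x (M + 1), ← Real.rpow_mul hxpos.le]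
    push_cast
    ring_nf
    congr 1; rw [ht]; ring
  have hsplit : ∀ a : ℝ, 0 ≤ a →
      (a * lam ^ (-(n : ℝ))) ^ t = a ^ t * (lam ^ t) ^ (-(n : ℝ)) := by
    intro a ha
    rw [Real.mul_rpow ha (Real.rpow_nonneg hl0 _), ← Real.rpow_mul hl0,
      ← Real.rpow_mul hl0, mul_comm (-(n : ℝ)) t]
  have hlowx : (lam - 1) * lam ^ (-(n : ℝ)) ≤ x := by
    have h2 : (lam - 1) * lam ^ (-(n : ℝ)) = (lam - 1) / lam ^ n := by
      rw [Real.rpow_neg hl0, Real.rpow_natCast, div_eq_mul_inv]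
    rw [h2, hx]
    gcongr
    linarith
  have hpow : lam ^ (n - 1) * lam = lam ^ n := by
    rw [← pow_succ]; congr 1; omega
  have hone_le : (1 : ℝ) ≤ lam ^ (n - 1) := one_le_pow₀ hlam.le
  have hden : lam ^ (n - 1) * (lam - 1) ≤ lam ^ n - 1 := by nlinarith [hpow, hone_le]
  have hdenpos : (0:ℝ) < lam ^ (n - 1) * (lam - 1) :=
    mul_pos (pow_pos (by linarith) _) hlm1
  have hupx : x ≤ lam * lam ^ (-(n : ℝ)) := by
    have h4 : x ≤ (lam - 1) / (lam ^ (n - 1) * (lam - 1)) := by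
      rw [hx]
      gcongr
    have h5 : (lam - 1) / (lam ^ (n - 1) * (lam - 1)) = lam * lam ^ (-(n : ℝ)) := by
      have hz1 : lam - 1 ≠ 0 := ne_of_gt hlm1
      have hz2 : lam ≠ 0 := by linarith
      rw [Real.rpow_neg hl0, Real.rpow_natCast, ← hpow]
      field_simp
    linarith
  constructor
  · rw [h1, ← hsplit (lam - 1) hlm1.le]
    exact Real.rpow_le_rpow (by positivity) hlowx htpos.le
  · rw [h1, ← hsplit lam hl0]
    exact Real.rpow_le_rpow hxpos.le hupx htpos.le

end CKAux


/-- For `λ > 1` and constant cookie number `M` : if `br(T) < λ^{M+1}` then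
`RT(T, ψ_{M,λ}) < 1`, and if `br(T) > λ^{M+1}` then `RT(T, ψ_{M,λ}) > 1`. -/
theorem RT_digging_lambda_gt_one (T : CKTree) (M : ℕ) (lam : ℝ) (hlam : 1 < lam)
    (ψ : T.E → ℝ)
    (hψ : ∀ e, ψ e = if T.gen e = 1 then 1
      else ((lam ^ (T.gen e - 1) - 1) / (lam ^ T.gen e - 1)) ^ (M + 1)) :
    (T.br < ENNReal.ofReal (lam ^ (M + 1)) → T.RT ψ < 1) ∧
    (ENNReal.ofReal (lam ^ (M + 1)) < T.br → 1 < T.RT ψ) := by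
  have hform := CKAux.pathProd_eq T M lam hlam ψ hψ
  have bounds := CKAux.pathProd_rpow_bounds T M lam hlam ψ hform
  have hl0 : (0:ℝ) ≤ lam := by linarith
  have hlM : (1:ℝ) < lam ^ (M+1) := one_lt_pow₀ hlam (by omega)
  have hlogpos : 0 < Real.log lam := Real.log_pos hlam
  have hppos : ∀ e, 0 < T.pathProd ψ e := by
    intro e
    rw [hform e]
    have h1 : (0:ℝ) < lam ^ T.gen e - 1 := by
      have : (1:ℝ) < lam ^ T.gen e := one_lt_pow₀ hlam (by have := T.gen_pos e; omega)
      linarith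
    exact pow_pos (div_pos (by linarith) h1) _
  constructor
  · intro hbr
    have hbrne : T.br ≠ ⊤ := (hbr.trans_le le_top).ne
    have hbrR : T.br.toReal < lam ^ (M+1) := by
      rwa [ENNReal.lt_ofReal_iff_toReal_lt hbrne] at hbr
    set A : ℝ := max T.br.toReal 1 with hAdef
    have hA : A < lam ^ (M+1) := max_lt hbrR hlM
    set c : ℝ := (A + lam ^ (M+1))/2 with hcdef
    have hAc : A < c := by rw [hcdef]; linarith
    have hcB : c < lam ^ (M+1) := by rw [hcdef]; linarith
    have hc1 : 1 < c := lt_of_le_of_lt (le_max_right _ _) hAc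
    have hc0 : 0 < c := by linarith
    set b : ℝ := Real.log c / (((M:ℝ)+1) * Real.log lam) with hbdef
    have hb0 : 0 < b := div_pos (Real.log_pos hc1) (by positivity)
    have hb1 : b < 1 := by
      rw [hbdef, div_lt_one (by positivity)]
      have h2 : Real.log c < Real.log (lam ^ (M+1)) := Real.log_lt_log hc0 hcB
      rw [Real.log_pow] at h2
      push_cast at h2
      linarith
    have hcb : lam ^ (((M:ℝ)+1) * b) = c := by
      have h3 : ((M:ℝ)+1) * b = Real.log c / Real.log lam := by
        rw [hbdef]; field_simp
      rw [h3, Real.log_div_log]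
      exact Real.rpow_logb (by linarith) (by linarith) hc0
    have hbrc : T.br < ENNReal.ofReal c := by
      rw [← ENNReal.ofReal_toReal hbrne]
      exact (ENNReal.ofReal_lt_ofReal_iff hc0).mpr
        (lt_of_le_of_lt (le_max_left _ 1) hAc)
    have hRT : T.RT ψ ≤ ENNReal.ofReal b := by
      apply sSup_le
      rintro x ⟨γ, hγ, rfl, hcut⟩
      have hne := CKAux.cutsets_nonempty T _ hcut
      set t : ℝ := ((M:ℝ)+1)*γ with htdef
      set L : ℝ := lam ^ t with hLdef
      have hLpos : 0 < L := Real.rpow_pos_of_pos (by linarith) _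
      have hcut2 : 0 < T.cutInf (fun e => L ^ (-(T.gen e : ℝ))) := by
        have h2 := CKAux.cutInf_mul_le T (fun e => T.pathProd ψ e ^ γ)
          (fun e => L ^ (-(T.gen e : ℝ))) L⁻¹ (by positivity)
          (fun e => Real.rpow_nonneg (hppos e).le _)
          (fun e => by
            have hup := (bounds e γ hγ).2
            calc L⁻¹ * T.pathProd ψ e ^ γ
                ≤ L⁻¹ * (L * L ^ (-(T.gen e : ℝ))) := by
                  apply mul_le_mul_of_nonneg_left _ (by positivity)
                  exact hup
              _ = L ^ (-(T.gen e : ℝ)) := by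
                  rw [← mul_assoc, inv_mul_cancel₀ hLpos.ne', one_mul]) hne
        exact lt_of_lt_of_le (mul_pos (by positivity) hcut) h2
      have hLbr : ENNReal.ofReal L ≤ T.br := le_sSup ⟨L, hLpos, rfl, hcut2⟩
      have hLc : L < c :=
        (ENNReal.ofReal_lt_ofReal_iff hc0).mp (lt_of_le_of_lt hLbr hbrc)
      have htb : t < ((M:ℝ)+1) * b := by
        rw [← Real.rpow_lt_rpow_left_iff hlam, hcb]
        exact hLc
      have hγb : γ < b := by
        rw [htdef] at htb
        have hM1 : (0:ℝ) < (M:ℝ)+1 := by positivity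
        exact lt_of_mul_lt_mul_left htb hM1.le
      exact ENNReal.ofReal_le_ofReal hγb.le
    refine lt_of_le_of_lt hRT ?_
    rw [← ENNReal.ofReal_one]
    exact (ENNReal.ofReal_lt_ofReal_iff one_pos).mpr hb1
  · intro hbr
    rw [CKTree.br, lt_sSup_iff] at hbr
    obtain ⟨x, ⟨γ, hγ0, rfl, hcut⟩, hx⟩ := hbr
    have hγgt : lam ^ (M+1) < γ := by
      rwa [ENNReal.ofReal_lt_ofReal_iff hγ0] at hx
    have hγ1 : 1 < γ := lt_trans hlM hγgt
    set s : ℝ := Real.log γ / (((M:ℝ)+1) * Real.log lam) with hsdef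
    have hs1 : 1 < s := by
      rw [hsdef, lt_div_iff₀ (by positivity)]
      have h2 : Real.log (lam ^ (M+1)) < Real.log γ :=
        Real.log_lt_log (by positivity) hγgt
      rw [Real.log_pow] at h2
      push_cast at h2
      linarith
    have hs0 : 0 < s := by linarith
    have hls : lam ^ (((M:ℝ)+1) * s) = γ := by
      have h3 : ((M:ℝ)+1) * s = Real.log γ / Real.log lam := by
        rw [hsdef]; field_simp
      rw [h3, Real.log_div_log]
      exact Real.rpow_logb (by linarith) (by linarith) (by linarith)
    have hne := CKAux.cutsets_nonempty T _ hcut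
    set C : ℝ := (lam-1) ^ (((M:ℝ)+1)*s) with hCdef
    have hCpos : 0 < C := Real.rpow_pos_of_pos (by linarith) _
    have h2 := CKAux.cutInf_mul_le T (fun e => γ ^ (-(T.gen e:ℝ)))
      (fun e => T.pathProd ψ e ^ s) C hCpos.le
      (fun e => Real.rpow_nonneg (by linarith) _)
      (fun e => by
        have hlow := (bounds e s hs0).1
        rw [hls] at hlow
        exact hlow) hne
    have hcut2 : 0 < T.cutInf (fun e => T.pathProd ψ e ^ s) :=
      lt_of_lt_of_le (mul_pos hCpos hcut) h2
    have hmem : ENNReal.ofReal s ≤ T.RT ψ := le_sSup ⟨s, hs0, rfl, hcut2⟩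
    refine lt_of_lt_of_le ?_ hmem
    rw [← ENNReal.ofReal_one]
    exact (ENNReal.ofReal_lt_ofReal_iff hs0).mpr hs1
end

section
/- If a tree T has branching-ruin number b < 1, then RT(T, ψ_{RC}) < 1 almost surely for i.i.d. positive conductances (regardless of the tail exponent), where ψ_{RC} is the ratio function of partial sums of inverse conductances. -/
open MeasureTheory ProbabilityTheory Finset ENNReal

/-- The quantity `RT(T, ψ_RC)` of a random-conductance environment `c`. -/
noncomputable def RTrc (T : CKTree) (c : T.E → ℝ) : ℝ≥0∞ :=
  sSup {x : ℝ≥0∞ | ∃ γ : ℝ, 0 < γ ∧ x = ENNReal.ofReal γ ∧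
    0 < T.cutInf (fun e =>
      (∑ k ∈ Finset.range (T.gen e), (c (T.parent^[k] e))⁻¹) ^ (-γ))}

/-!
Write `S_e = ∑_{g ≤ e} C_g⁻¹`. The inverse conductances are i.i.d. and positive, so
`q = E[exp(-C⁻¹)] < 1`, and the Chernoff bound `P(S_e ≤ a |e|) ≤ (exp a * q) ^ |e|` decays
exponentially in `|e|` for small `a > 0`, hence faster than `|e| ^ (-s)`. Pick `b < s < 1`.
Since `br_r(T) < s` there are cutsets `π_n` with `∑_{e ∈ π_n} |e| ^ (-s) < 2 ^ (-n)`, so by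
Borel–Cantelli, almost surely `S_e > a |e|` on all of `π_n` for large `n`. Then for `γ > s`,
`∑_{e ∈ π_n} S_e ^ (-γ) ≤ a ^ (-γ) 2 ^ (-n) → 0`, whence `RT(T, ψ_RC) ≤ s < 1`.
-/

open Filter Topology

section Chernoff

variable {ι Ω : Type*} [MeasurableSpace Ω] {μ : Measure Ω} [IsProbabilityMeasure μ]

lemma integrable_exp_neg_of_nonneg {X : Ω → ℝ} (hX : AEMeasurable X μ)
    (hnonneg : ∀ᵐ ω ∂μ, 0 ≤ X ω) : Integrable (fun ω => Real.exp (-1 * X ω)) μ := by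
  refine .of_mem_Icc 0 1 (by fun_prop) ?_
  filter_upwards [hnonneg] with ω hω
  exact ⟨(Real.exp_pos _).le, Real.exp_le_one_iff.2 (by linarith)⟩

lemma mgf_neg_one_lt_one {X : Ω → ℝ} (hX : AEMeasurable X μ) (hpos : ∀ᵐ ω ∂μ, 0 < X ω) :
    mgf X μ (-1) < 1 := by
  have hlt : ∀ᵐ ω ∂μ, 0 < 1 - Real.exp (-1 * X ω) := by
    filter_upwards [hpos] with ω hω
    exact sub_pos.2 (Real.exp_lt_one_iff.2 (by linarith))
  have hint := integrable_exp_neg_of_nonneg hX (hpos.mono fun _ h => h.le)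
  have hsupp : μ (Function.support fun ω => 1 - Real.exp (-1 * X ω)) = 1 :=
    (measure_congr (eventuallyEq_univ.2 (hlt.mono fun _ h => h.ne'))).trans measure_univ
  have := (integral_pos_iff_support_of_nonneg_ae (hlt.mono fun _ h => h.le)
    ((integrable_const 1).sub hint)).2 (by rw [hsupp]; exact one_pos)
  rw [integral_sub (integrable_const 1) hint] at this
  simpa [mgf] using this

lemma measureReal_sum_le_mul_card_le_pow {X : ι → Ω → ℝ} (hmeas : ∀ i, Measurable (X i))
    (hindep : iIndepFun X μ) (hnonneg : ∀ i, ∀ᵐ ω ∂μ, 0 ≤ X i ω) {q : ℝ}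
    (hq : ∀ i, mgf (X i) μ (-1) = q) (a : ℝ) (A : Finset ι) :
    μ.real {ω | ∑ i ∈ A, X i ω ≤ a * #A} ≤ (Real.exp a * q) ^ #A := by
  have hint : Integrable (fun ω => Real.exp (-1 * (∑ i ∈ A, X i) ω)) μ :=
    hindep.integrable_exp_mul_sum hmeas fun i _ =>
      integrable_exp_neg_of_nonneg (hmeas i).aemeasurable (hnonneg i)
  have h := measure_le_le_exp_mul_mgf (a * #A) (by norm_num) hint
  rw [hindep.mgf_sum hmeas, prod_congr rfl fun i _ => hq i, prod_const] at h
  convert h using 2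
  · simp [Finset.sum_apply]
  · rw [mul_pow, ← Real.exp_nat_mul]; ring_nf

lemma exists_measure_sum_le_mul_card_le_pow [Nonempty ι] {X : ι → Ω → ℝ}
    (hmeas : ∀ i, Measurable (X i)) (hindep : iIndepFun X μ)
    (hident : ∀ i j, IdentDistrib (X i) (X j) μ μ) (hpos : ∀ i, ∀ᵐ ω ∂μ, 0 < X i ω) :
    ∃ a > 0, ∃ r ∈ Set.Ico (0 : ℝ) 1,
      ∀ A : Finset ι, μ {ω | ∑ i ∈ A, X i ω ≤ a * #A} ≤ ENNReal.ofReal (r ^ #A) := by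
  obtain ⟨i₀⟩ := ‹Nonempty ι›
  set q := mgf (X i₀) μ (-1)
  have hq0 : 0 < q := mgf_pos
    (integrable_exp_neg_of_nonneg (hmeas i₀).aemeasurable ((hpos i₀).mono fun _ h => h.le))
  have hq1 : q < 1 := mgf_neg_one_lt_one (hmeas i₀).aemeasurable (hpos i₀)
  obtain ⟨r, hqr, hr1⟩ := exists_between hq1
  -- the Chernoff base `exp a * q` equals `r` for `a = log (r / q)`
  refine ⟨Real.log (r / q), Real.log_pos ((one_lt_div hq0).2 hqr), r, ⟨by linarith, hr1⟩,
    fun A => ?_⟩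
  have h := measureReal_sum_le_mul_card_le_pow hmeas hindep (fun i => (hpos i).mono fun _ h => h.le)
    (fun i => congrFun (mgf_congr_identDistrib (hident i i₀)) (-1)) (Real.log (r / q)) A
  rw [Real.exp_log (div_pos (hq0.trans hqr) hq0), div_mul_cancel₀ r hq0.ne'] at h
  rw [← ofReal_measureReal]
  exact ENNReal.ofReal_le_ofReal h

end Chernoff

lemma exists_pow_le_mul_rpow_neg {r s : ℝ} (hr0 : 0 ≤ r) (hr1 : r < 1) (hs : s ≤ 1) :
    ∃ K ≥ 0, ∀ m : ℕ, 1 ≤ m → r ^ m ≤ K * (m : ℝ) ^ (-s) := by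
  obtain ⟨K, hK⟩ := (tendsto_self_mul_const_pow_of_lt_one hr0 hr1).bddAbove_range
  have hK0 : 0 ≤ K := by simpa using hK (Set.mem_range_self 0)
  refine ⟨K, hK0, fun m hm => ?_⟩
  have hm1 : (1 : ℝ) ≤ m := by exact_mod_cast hm
  calc r ^ m = (m * r ^ m) * (m : ℝ) ^ (-1 : ℝ) := by
        rw [Real.rpow_neg_one]; field_simp
    _ ≤ K * (m : ℝ) ^ (-s) := by
        gcongr
        exact hK (Set.mem_range_self m)

lemma ae_eventually_forall_mem_notMem_of_sum_le_geometric {ι α : Type*} [MeasurableSpace α]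
    {μ : Measure α} {B : ι → Set α} {π : ℕ → Finset ι} {w : ι → ℝ} {K : ℝ} (hK : 0 ≤ K)
    (hw : ∀ i, 0 ≤ w i) (hB : ∀ i, μ (B i) ≤ ENNReal.ofReal (K * w i))
    (hπ : ∀ n, ∑ i ∈ π n, w i ≤ (1 / 2) ^ n) :
    ∀ᵐ x ∂μ, ∀ᶠ n in atTop, ∀ i ∈ π n, x ∉ B i := by
  have hsum : ∀ n, μ (⋃ i ∈ π n, B i) ≤ ENNReal.ofReal (K * (1 / 2) ^ n) := fun n =>
    calc μ (⋃ i ∈ π n, B i) ≤ ∑ i ∈ π n, ENNReal.ofReal (K * w i) :=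
          (measure_biUnion_finset_le _ _).trans (sum_le_sum fun i _ => hB i)
      _ = ENNReal.ofReal (K * ∑ i ∈ π n, w i) := by
          rw [mul_sum, ENNReal.ofReal_sum_of_nonneg fun i _ => mul_nonneg hK (hw i)]
      _ ≤ ENNReal.ofReal (K * (1 / 2) ^ n) := by gcongr; exact hπ n
  have hfin : ∑' n, μ (⋃ i ∈ π n, B i) ≠ ∞ := by
    refine ne_top_of_le_ne_top ?_ (ENNReal.tsum_le_tsum hsum)
    rw [← ENNReal.ofReal_tsum_of_nonneg (fun n => by positivity)
      ((summable_geometric_two).mul_left K)]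
    exact ENNReal.ofReal_ne_top
  filter_upwards [ae_eventually_notMem hfin] with x hx
  filter_upwards [hx] with n hn i hi hxi
  exact hn (Set.mem_biUnion hi hxi)

lemma rpow_neg_le_mul_rpow_neg_of_mul_lt {a n y s γ : ℝ} (ha : 0 < a) (hn : 1 ≤ n) (hs : 0 ≤ s)
    (hsγ : s ≤ γ) (hy : a * n < y) : y ^ (-γ) ≤ a ^ (-γ) * n ^ (-s) :=
  calc y ^ (-γ) ≤ (a * n) ^ (-γ) := Real.rpow_le_rpow_of_nonpos (by positivity) hy.le (by linarith)
    _ = a ^ (-γ) * n ^ (-γ) := Real.mul_rpow ha.le (by linarith)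
    _ ≤ a ^ (-γ) * n ^ (-s) := by gcongr

namespace CKTree

variable (T : CKTree)

instance : Countable T.E := by
  have h : (Set.univ : Set T.E) ⊆ ⋃ n, {e | T.gen e = n} :=
    fun e _ => Set.mem_iUnion.2 ⟨T.gen e, rfl⟩
  exact Set.countable_univ_iff.1
    ((Set.countable_iUnion fun n => (T.locally_finite n).countable).mono h)

lemma gen_iterate_parent_add {e : T.E} {k : ℕ} (hk : k < T.gen e) :
    T.gen (T.parent^[k] e) + k = T.gen e := by
  induction k with
  | zero => rfl
  | succ k ih =>
    have h := ih (by omega)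
    have := T.parent_gen _ (by omega : 1 < T.gen (T.parent^[k] e))
    rw [Function.iterate_succ_apply']
    omega

open Classical in
/-- The edges `g` with `T.ple g e`. -/
noncomputable def pathEdges (e : T.E) : Finset T.E :=
  (range (T.gen e)).image (T.parent^[·] e)

lemma injOn_iterate_parent (e : T.E) :
    Set.InjOn (T.parent^[·] e) (range (T.gen e)) := fun k hk l hl h => by
  have hk := T.gen_iterate_parent_add (mem_range.1 hk)
  have hl := T.gen_iterate_parent_add (mem_range.1 hl)
  simp only at h
  rw [h] at hk
  omega

lemma card_pathEdges (e : T.E) : #(T.pathEdges e) = T.gen e := by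
  classical
  rw [pathEdges, card_image_of_injOn (T.injOn_iterate_parent e), card_range]

lemma sum_pathEdges {M : Type*} [AddCommMonoid M] (f : T.E → M) (e : T.E) :
    ∑ g ∈ T.pathEdges e, f g = ∑ k ∈ range (T.gen e), f (T.parent^[k] e) := by
  classical
  rw [pathEdges, sum_image (T.injOn_iterate_parent e)]

lemma isCutset_gen_eq_one : T.IsCutset (T.locally_finite 1).toFinset := fun r hr =>
  ⟨0, by simpa using hr.1 0, fun k hk => by simpa [hr.1 k] using hk⟩

variable {T}

lemma cutInf_le_sum {f : T.E → ℝ} (hf : ∀ e, 0 ≤ f e) {π : Finset T.E} (hπ : T.IsCutset π) :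
    T.cutInf f ≤ ∑ e ∈ π, f e :=
  csInf_le ⟨0, by rintro _ ⟨π', -, rfl⟩; exact sum_nonneg fun e _ => hf e⟩ ⟨π, hπ, rfl⟩

lemma exists_isCutset_sum_lt {f : T.E → ℝ} (hf : T.cutInf f ≤ 0) {ε : ℝ} (hε : 0 < ε) :
    ∃ π, T.IsCutset π ∧ ∑ e ∈ π, f e < ε := by
  obtain ⟨_, ⟨π, hπ, rfl⟩, hlt⟩ :=
    exists_lt_of_csInf_lt (Set.Nonempty.image _ ⟨_, T.isCutset_gen_eq_one⟩) (hf.trans_lt hε)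
  exact ⟨π, hπ, hlt⟩

lemma cutInf_rpow_neg_gen_nonpos {s : ℝ} (hs : 0 < s) (h : T.brr < ENNReal.ofReal s) :
    T.cutInf (fun e => (T.gen e : ℝ) ^ (-s)) ≤ 0 := by
  by_contra! hpos
  exact h.not_ge (le_sSup ⟨s, hs, rfl, hpos⟩)

lemma cutInf_rpow_neg_nonpos {y : T.E → ℝ} (hy : ∀ e, 0 ≤ y e) {π : ℕ → Finset T.E}
    (hπ : ∀ n, T.IsCutset (π n)) {a s γ : ℝ} (ha : 0 < a) (hs : 0 ≤ s) (hsγ : s ≤ γ)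
    (hπsum : ∀ n, ∑ e ∈ π n, (T.gen e : ℝ) ^ (-s) ≤ (1 / 2) ^ n)
    (hlarge : ∀ᶠ n in atTop, ∀ e ∈ π n, a * T.gen e < y e) :
    T.cutInf (fun e => y e ^ (-γ)) ≤ 0 := by
  have hbound : ∀ᶠ n in atTop, T.cutInf (fun e => y e ^ (-γ)) ≤ a ^ (-γ) * (1 / 2) ^ n := by
    filter_upwards [hlarge] with n hn
    calc T.cutInf (fun e => y e ^ (-γ)) ≤ ∑ e ∈ π n, y e ^ (-γ) :=
          cutInf_le_sum (fun e => Real.rpow_nonneg (hy e) _) (hπ n)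
      _ ≤ ∑ e ∈ π n, a ^ (-γ) * (T.gen e : ℝ) ^ (-s) := sum_le_sum fun e he =>
          rpow_neg_le_mul_rpow_neg_of_mul_lt ha (by exact_mod_cast T.gen_pos e) hs hsγ (hn e he)
      _ ≤ a ^ (-γ) * (1 / 2) ^ n := by rw [← mul_sum]; gcongr; exact hπsum n
  have hlim : Tendsto (fun n : ℕ => a ^ (-γ) * (1 / 2 : ℝ) ^ n) atTop (𝓝 0) := by
    simpa using (tendsto_pow_atTop_nhds_zero_of_lt_one (by norm_num) one_half_lt_one).const_mul
      (a ^ (-γ))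
  exact ge_of_tendsto hlim hbound

lemma exists_measure_pathSum_le_mul_gen_le {Ω : Type*} [MeasurableSpace Ω] {μ : Measure Ω}
    [IsProbabilityMeasure μ] {X : T.E → Ω → ℝ} (hmeas : ∀ e, Measurable (X e))
    (hindep : iIndepFun X μ) (hident : ∀ e e', IdentDistrib (X e) (X e') μ μ)
    (hpos : ∀ e, ∀ᵐ ω ∂μ, 0 < X e ω) {s : ℝ} (hs : s ≤ 1) :
    ∃ a > 0, ∃ K ≥ 0, ∀ e, μ {ω | ∑ k ∈ range (T.gen e), X (T.parent^[k] e) ω ≤ a * T.gen e}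
      ≤ ENNReal.ofReal (K * (T.gen e : ℝ) ^ (-s)) := by
  have : Nonempty T.E := @Infinite.nonempty _ T.infinite
  obtain ⟨a, ha, r, ⟨hr0, hr1⟩, hdev⟩ :=
    exists_measure_sum_le_mul_card_le_pow hmeas hindep hident hpos
  obtain ⟨K, hK0, hK⟩ := exists_pow_le_mul_rpow_neg hr0 hr1 hs
  refine ⟨a, ha, K, hK0, fun e => ?_⟩
  have h := hdev (T.pathEdges e)
  rw [card_pathEdges] at h
  simp only [sum_pathEdges] at h
  exact h.trans (ENNReal.ofReal_le_ofReal (hK _ (T.gen_pos e)))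

end CKTree

lemma RTrc_le_ofReal {T : CKTree} {c : T.E → ℝ} {θ : ℝ}
    (h : ∀ γ, θ < γ → T.cutInf (fun e =>
      (∑ k ∈ Finset.range (T.gen e), (c (T.parent^[k] e))⁻¹) ^ (-γ)) ≤ 0) :
    RTrc T c ≤ ENNReal.ofReal θ := by
  refine sSup_le ?_
  rintro _ ⟨γ, -, rfl, hγ⟩
  by_contra! hθγ
  exact (h γ (ENNReal.ofReal_lt_ofReal_iff'.1 hθγ).1).not_gt hγ

theorem RTrc_lt_one_of_brr_lt_one_general (T : CKTree) {Ω : Type} [MeasurableSpace Ω]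
    (μ : Measure Ω) [IsProbabilityMeasure μ] (C : T.E → Ω → ℝ) (b : ℝ)
    (hmeas : ∀ e, Measurable (C e))
    (hindep : iIndepFun C μ)
    (hident : ∀ e e', IdentDistrib (C e) (C e') μ μ)
    (hpos : ∀ e, ∀ᵐ ω ∂μ, 0 < C e ω)
    (hbrr : T.brr = ENNReal.ofReal b) (hb1 : b < 1) :
    μ {ω | RTrc T (fun e => C e ω) < 1} = 1 := by
  obtain ⟨s, hbs, hs1⟩ := exists_between (max_lt hb1 one_pos)
  have hs0 : 0 < s := (le_max_right b 0).trans_lt hbs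
  have hcut : T.cutInf (fun e => (T.gen e : ℝ) ^ (-s)) ≤ 0 := by
    refine CKTree.cutInf_rpow_neg_gen_nonpos hs0 ?_
    rw [hbrr]
    exact (ENNReal.ofReal_lt_ofReal_iff hs0).2 ((le_max_left b 0).trans_lt hbs)
  choose π hπ hπsum using fun n : ℕ => CKTree.exists_isCutset_sum_lt hcut (pow_pos one_half_pos n)
  obtain ⟨a, ha, K, hK, hdev⟩ := T.exists_measure_pathSum_le_mul_gen_le (X := fun e ω => (C e ω)⁻¹)
    (fun e => (hmeas e).inv) (hindep.comp _ fun _ => measurable_inv)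
    (fun e e' => (hident e e').comp measurable_inv) (fun e => (hpos e).mono fun _ => inv_pos.2)
    hs1.le
  have hlarge := ae_eventually_forall_mem_notMem_of_sum_le_geometric hK (fun e => by positivity)
    hdev (fun n => (hπsum n).le)
  refine (measure_congr (eventuallyEq_univ.2 ?_)).trans measure_univ
  filter_upwards [hlarge, ae_all_iff.2 hpos] with ω hω hCω
  refine (RTrc_le_ofReal fun γ hγ => ?_).trans_lt (ENNReal.ofReal_lt_one.2 hs1)
  refine CKTree.cutInf_rpow_neg_nonpos
    (y := fun e => ∑ k ∈ range (T.gen e), (C (T.parent^[k] e) ω)⁻¹)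
    (fun e => sum_nonneg fun k _ => (inv_pos.2 (hCω _)).le) hπ ha hs0.le hγ.le
    (fun n => (hπsum n).le) ?_
  filter_upwards [hω] with n hn e he using not_le.1 (hn e he)

/-- If `br_r(T) = b < 1`, then for any i.i.d. positive conductances (regardless of tail),
almost surely `RT(T, ψ_RC) < 1`. -/
theorem RTrc_lt_one_of_brr_lt_one (T : CKTree) {Ω : Type} [MeasurableSpace Ω]
    (μ : Measure Ω) [IsProbabilityMeasure μ] (C : T.E → Ω → ℝ) (b : ℝ)
    (hmeas : ∀ e, Measurable (C e))
    (hindep : iIndepFun C μ)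
    (hident : ∀ e e', IdentDistrib (C e) (C e') μ μ)
    (hpos : ∀ e, ∀ᵐ ω ∂μ, 0 < C e ω)
    (hbrr : T.brr = ENNReal.ofReal b) (hb0 : 0 ≤ b) (hb1 : b < 1) :
    μ {ω | RTrc T (fun e => C e ω) < 1} = 1 :=
  RTrc_lt_one_of_brr_lt_one_general T μ C b hmeas hindep hident hpos hbrr hb1
end

section
/- Fix λ > 0 and integers m_g ≤ M for all edges. For e < e₁ in a tree, with p = 1/Σ_{g≤e} λ^{|g|-1}, the product over edges g with e < g ≤ e₁ of (1 + p^{-1}λ^{|g|-1} / ((p^{-1} + Σ_{e<g'<g}λ^{|g'|-1})(p^{-1} + Σ_{e<g'≤g}λ^{|g'|-1})))^{m_g + 1} is at most exp(M+1). -/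
/-- Along a path, with `p⁻¹ = ∑_{j=1}^n λ^{j-1}` and cookie numbers `m_g ≤ M`, the
product over the edges `g` of generations `n < k ≤ n₁` of
`(1 + p⁻¹λ^{k-1}/((p⁻¹ + ∑_{n<j<k} λ^{j-1})(p⁻¹ + ∑_{n<j≤k} λ^{j-1})))^{m_k+1}`
is at most `exp(M+1)`. -/
theorem telescoping_product_bound (lam : ℝ) (hlam : 0 < lam) (M : ℕ) (m : ℕ → ℕ)
    (hm : ∀ k, m k ≤ M) (n n₁ : ℕ) (hn : 1 ≤ n) (hn₁ : n < n₁)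
    (pinv : ℝ) (hp : pinv = ∑ j ∈ Finset.Icc 1 n, lam ^ (j - 1)) :
    (∏ k ∈ Finset.Icc (n + 1) n₁,
      (1 + pinv * lam ^ (k - 1) /
        ((pinv + ∑ j ∈ Finset.Icc (n + 1) (k - 1), lam ^ (j - 1)) *
         (pinv + ∑ j ∈ Finset.Icc (n + 1) k, lam ^ (j - 1)))) ^ (m k + 1)) ≤
    Real.exp ((M : ℝ) + 1) := by
  set S : ℕ → ℝ := fun k => ∑ j ∈ Finset.Icc (n + 1) k, lam ^ (j - 1) with hS
  have hpinv : 0 < pinv := by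
    rw [hp]
    apply Finset.sum_pos (fun j _ => pow_pos hlam _)
    exact ⟨1, Finset.mem_Icc.mpr ⟨le_refl 1, hn⟩⟩
  have hSnonneg : ∀ k, 0 ≤ S k := fun k =>
    Finset.sum_nonneg (fun j _ => (pow_pos hlam _).le)
  have hden : ∀ k, 0 < pinv + S k := fun k => by
    have := hSnonneg k; linarith
  set x : ℕ → ℝ := fun k => pinv * lam ^ (k - 1) /
      ((pinv + S (k - 1)) * (pinv + S k)) with hx
  set f : ℕ → ℝ := fun k => pinv / (pinv + S k) with hf
  have hxeq : ∀ k, n + 1 ≤ k → x k = f (k - 1) - f k := by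
    intro k hk
    have hk1 : k = (k - 1) + 1 := (Nat.succ_pred_eq_of_pos (by omega)).symm
    have hSstep : S k = S (k - 1) + lam ^ (k - 1) := by
      rw [hS]
      simp only
      rw [hk1, Finset.sum_Icc_succ_top (by omega)]
      congr 1
    have h1 := (hden (k - 1)).ne'
    have h2 := (hden k).ne'
    rw [hx, hf]
    simp only
    rw [hSstep] at h2 ⊢
    field_simp
    ring
  have hxnonneg : ∀ k, 0 ≤ x k := fun k =>
    div_nonneg (mul_nonneg hpinv.le (pow_pos hlam _).le)
      (mul_nonneg (hden _).le (hden _).le)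
  -- telescoping sum
  have htel : ∀ N, n < N → ∑ k ∈ Finset.Icc (n + 1) N, x k = f n - f N := by
    intro N hN
    induction N, hN using Nat.le_induction with
    | base => simp [hxeq (n+1) le_rfl]
    | succ N hN ih =>
        rw [Finset.sum_Icc_succ_top (by omega), ih, hxeq (N+1) (by omega)]
        simp
  have hsum : ∑ k ∈ Finset.Icc (n + 1) n₁, x k ≤ 1 := by
    rw [htel n₁ hn₁]
    have hfn : f n = 1 := by
      rw [hf]; simp only
      have : S n = 0 := by rw [hS]; simp
      rw [this, add_zero, div_self hpinv.ne']
    have hf1 : 0 ≤ f n₁ := div_nonneg hpinv.le (hden _).le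
    linarith
  calc (∏ k ∈ Finset.Icc (n + 1) n₁, (1 + x k) ^ (m k + 1))
      ≤ ∏ k ∈ Finset.Icc (n + 1) n₁, Real.exp (((M : ℝ) + 1) * x k) := by
        apply Finset.prod_le_prod
        · intro k _
          exact pow_nonneg (by have := hxnonneg k; linarith) _
        · intro k _
          calc (1 + x k) ^ (m k + 1) ≤ Real.exp (x k) ^ (m k + 1) := by
                apply pow_le_pow_left₀ (by have := hxnonneg k; linarith)
                linarith [Real.add_one_le_exp (x k)]
            _ = Real.exp ((↑(m k) + 1) * x k) := by
                rw [← Real.exp_nat_mul]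
                congr 1
                push_cast
                ring
            _ ≤ Real.exp (((M : ℝ) + 1) * x k) := by
                apply Real.exp_le_exp.mpr
                apply mul_le_mul_of_nonneg_right _ (hxnonneg k)
                have h : (m k : ℝ) ≤ M := by exact_mod_cast hm k
                linarith
    _ = Real.exp (((M : ℝ) + 1) * ∑ k ∈ Finset.Icc (n + 1) n₁, x k) := by
        rw [← Real.exp_sum, Finset.mul_sum]
    _ ≤ Real.exp ((M : ℝ) + 1) := by
        apply Real.exp_le_exp.mpr
        nlinarith [hsum]
end
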